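/- Let P be an involutive subset of the Tits boundary ∂X of a geodesically complete proper CAT(0) space X (with the Tits metric). Then the set P^⊥ = {x ∈ ∂X : d_Tits(x,y) = π/2 for all y ∈ P} is closed in the cone topology. -/

import Mathlib

/-!
For involutive `P`, the set `P^⊥` equals the intersection of the sublevel sets
`{x | d x y ≤ π/2}`, `y ∈ P`, which are closed by lower semicontinuity: a point `x` in all of
them with `d x y < π/2` would give, for an antipode `y' ∈ P` of `y`,
`π ≤ d y y' ≤ d x y + d x y' < π`.
-/

open Real

open scoped ENNReal

section PerpOfInvolutive

variable {B : Type*} {d : B → B → ℝ≥0∞}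

theorem le_dist_of_add_le_dist (hsymm : ∀ a b, d a b = d b a)
    (htri : ∀ a b c, d a c ≤ d a b + d b c) {x y y' : B} {r s : ℝ≥0∞} (hs : s ≠ ⊤)
    (hyy' : r + s ≤ d y y') (hxy' : d x y' ≤ s) : r ≤ d x y := by
  have : r + s ≤ d x y + s := calc
    r + s ≤ d y y' := hyy'
    _ ≤ d y x + d x y' := htri y x y'
    _ ≤ d x y + s := by rw [hsymm y x]; gcongr
  exact (ENNReal.add_le_add_iff_right hs).mp this

theorem setOf_forall_dist_eq_eq_setOf_forall_dist_le (hsymm : ∀ a b, d a b = d b a)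
    (htri : ∀ a b c, d a c ≤ d a b + d b c) {r : ℝ≥0∞} (hr : r ≠ ⊤)
    (hantipode : ∀ a : B, ∃ a' : B, r + r ≤ d a a') {P : Set B}
    (hinv : ∀ p ∈ P, ∀ q : B, r + r ≤ d p q → q ∈ P) :
    {x : B | ∀ y ∈ P, d x y = r} = {x : B | ∀ y ∈ P, d x y ≤ r} := by
  ext x
  refine ⟨fun h y hy => (h y hy).le, fun h y hy => le_antisymm (h y hy) ?_⟩
  obtain ⟨y', hyy'⟩ := hantipode y
  exact le_dist_of_add_le_dist hsymm htri hr hyy' (h y' (hinv y hy y' hyy'))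

theorem isClosed_setOf_forall_dist_le [TopologicalSpace B]
    (hlsc : ∀ b : B, LowerSemicontinuous (fun a => d a b)) (P : Set B) (r : ℝ≥0∞) :
    IsClosed {x : B | ∀ y ∈ P, d x y ≤ r} := by
  simp only [Set.ofPred_forall]
  exact isClosed_biInter fun y _ => (hlsc y).isClosed_preimage r

end PerpOfInvolutive

theorem ENNReal.ofReal_pi_eq_add :
    ENNReal.ofReal π = ENNReal.ofReal (π / 2) + ENNReal.ofReal (π / 2) := by
  rw [← ENNReal.ofReal_add (by positivity) (by positivity), add_halves]

theorem perp_closed_of_involutive {B : Type*} [TopologicalSpace B]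
    (dT : B → B → ENNReal)
    (hsymm : ∀ a b, dT a b = dT b a)
    (htri : ∀ a b c, dT a c ≤ dT a b + dT b c)
    (hlsc : ∀ b : B, LowerSemicontinuous (fun a => dT a b))
    (hantipode : ∀ a : B, ∃ a' : B, ENNReal.ofReal π ≤ dT a a')
    (P : Set B)
    (hinv : ∀ p ∈ P, ∀ q : B, ENNReal.ofReal π ≤ dT p q → q ∈ P) :
    IsClosed {x : B | ∀ y ∈ P, dT x y = ENNReal.ofReal (π / 2)} := by
  rw [ENNReal.ofReal_pi_eq_add] at hantipode hinv
  rw [setOf_forall_dist_eq_eq_setOf_forall_dist_le hsymm htri ENNReal.ofReal_ne_top hantipode hinv]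
  exact isClosed_setOf_forall_dist_le hlsc P _
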